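/- arXiv:1308.4499 — 4 statements merged into one kernel-verified Lean document; each statement's English description precedes it below -/
import Mathlib

section
/- Let C be a linear code of length n over F_q whose dual distance d⊥ satisfies d⊥ ≥ 5, with generator matrix whose rows (as codeword-coordinate functionals) are h_1, ..., h_n ∈ F_q^k. Then for every nonzero vector v ∈ F_q^k, the number of ordered pairs (t_1, t_2) with 1 ≤ t_1, t_2 ≤ n and h_{t_1} + h_{t_2} = v is at most 3. -/
/-!
A coincidence `h a + h b = h c + h d` is a linear relation among at most four of the `h i`,
so by 4-wise independence all its coefficients vanish. This forces `{a, b} = {c, d}`, except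
when `a = b`, `c = d` and the characteristic is 2, where both sides are `0`; `v ≠ 0` rules that
out. So the pairs summing to `v` are at most `(a, b)` and `(b, a)`.
-/

section

open Finsupp

variable {ι K V : Type*} [Field K] [AddCommGroup V] [Module K V] {h : ι → V}

theorem LinearIndepOn.single_add_single_sub_single_sub_single_eq_zero {a b c d : ι}
    (hind : LinearIndepOn K h {a, b, c, d}) (heq : h a + h b = h c + h d) :
    single a (1 : K) + single b 1 - single c 1 - single d 1 = 0 := by
  refine linearIndepOn_iff.mp hind _ ?_ ?_
  · refine sub_mem (sub_mem (add_mem ?_ ?_) ?_) ?_ <;> exact single_mem_supported K 1 (by simp)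
  · simp [heq]

theorem LinearIndepOn.eq_and_eq_or_eq_and_eq_of_add_eq_add {a b c d : ι}
    (hind : LinearIndepOn K h {a, b, c, d}) (hne : h a + h b ≠ 0) (heq : h a + h b = h c + h d) :
    (a = c ∧ b = d) ∨ (a = d ∧ b = c) := by
  classical
  have hcoeff (x : ι) :=
    DFunLike.congr_fun (hind.single_add_single_sub_single_sub_single_eq_zero heq) x
  simp only [coe_add, coe_sub, Pi.add_apply, Pi.sub_apply, single_apply, coe_zero,
    Pi.zero_apply] at hcoeff
  have ha : a = c ∨ a = d := by
    by_contra! ⟨hac, had⟩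
    have hca := hcoeff a
    simp only [if_neg (Ne.symm hac), if_neg (Ne.symm had), sub_zero] at hca
    by_cases hba : b = a
    · subst hba
      have hchar : (1 + 1 : K) = 0 := by simpa using hca
      exact hne (by rw [← one_smul K (h b), ← add_smul, hchar, zero_smul])
    · simp [hba] at hca
  rcases ha with rfl | rfl
  · have hb := hcoeff b
    grind
  · have hb := hcoeff b
    grind

end

theorem pair_sum_count_le_three_general (n k : ℕ) (F : Type*) [Field F] [DecidableEq F]
    (h : Fin n → (Fin k → F))
    (hdual : ∀ s : Finset (Fin n), s.card ≤ 4 →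
      LinearIndependent F (fun i : {x // x ∈ s} => h i))
    (v : Fin k → F) (hv : v ≠ 0) :
    (Finset.univ.filter (fun t : Fin n × Fin n => h t.1 + h t.2 = v)).card ≤ 3 := by
  set S := Finset.univ.filter (fun t : Fin n × Fin n => h t.1 + h t.2 = v)
  obtain hS | ⟨p, hp⟩ := S.eq_empty_or_nonempty
  · simp [hS]
  have hsub : S ⊆ {p, p.swap} := by
    intro q hq
    rw [Finset.mem_filter] at hp hq
    have hind : LinearIndepOn F h ({q.1, q.2, p.1, p.2} : Finset _) :=
      hdual _ Finset.card_le_four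
    push_cast at hind
    rcases hind.eq_and_eq_or_eq_and_eq_of_add_eq_add (hq.2 ▸ hv) (hq.2.trans hp.2.symm) with
      ⟨h1, h2⟩ | ⟨h1, h2⟩
    · simp [Prod.ext h1 h2]
    · simp [Prod.ext_iff, h1, h2]
  calc S.card ≤ ({p, p.swap} : Finset _).card := Finset.card_le_card hsub
    _ ≤ 3 := Finset.card_le_two.trans (by norm_num)

theorem pair_sum_count_le_three (n k : ℕ) (F : Type*) [Field F] [Fintype F] [DecidableEq F]
    (h : Fin n → (Fin k → F))
    (hdual : ∀ s : Finset (Fin n), s.card ≤ 4 →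
      LinearIndependent F (fun i : {x // x ∈ s} => h i))
    (v : Fin k → F) (hv : v ≠ 0) :
    (Finset.univ.filter (fun t : Fin n × Fin n => h t.1 + h t.2 = v)).card ≤ 3 :=
  pair_sum_count_le_three_general n k F h hdual v hv
end

section
/- Let l ≥ 1, let {I_λ}_{λ=1}^{v_a} be a partition of [1,l] into nonempty sets with shifted sets Ĩ_λ = I_λ - 1 (mod l), and let {J_μ}_{μ=1}^{v_b} be another partition of [1,l] into nonempty sets. Consider the system of linear equations over ℝ in variables X_1,...,X_l, Y_1,...,Y_l: Σ_{u∈I_λ} X_u = Σ_{u∈Ĩ_λ} Y_u for all λ, and Σ_{u∈J_μ} X_u = Σ_{u∈J_μ} Y_u for all μ. Then the solution space W ⊆ ℝ^{2l} has dimension exactly 2l - v_a - v_b + 1. -/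
/-!
Write `A`, `Ã`, `B` for the maps `ℝ^l → ℝ^{v_a}`, `ℝ^l → ℝ^{v_a}`, `ℝ^l → ℝ^{v_b}` summing over
the blocks `I_λ`, `Ĩ_λ`, `J_μ`, so that `W` is the kernel of `T (X, Y) = (A X - Ã Y, B X - B Y)`.
The image of `T` lies in the hyperplane `∑ p = ∑ q`, and fills it: given `(p, q)` there, pick `Z`
with `B Z = q`, then `X` with `A X - Ã X = p - Ã Z`, and put `Y = X - Z`. The middle step works
because `A X - Ã X = A (X - X(· - 1))`, and cyclic differences realize every vector of sum zero.
Rank–nullity then gives `dim W = 2l - (v_a + v_b - 1)`.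
-/

open Finset

section FiberSum

variable {R : Type*} [CommSemiring R] {ι κ : Type*} [Fintype ι] [DecidableEq κ]

def fiberSum (f : ι → κ) : (ι → R) →ₗ[R] (κ → R) where
  toFun x k := ∑ i ∈ univ.filter (fun i => f i = k), x i
  map_add' x y := by ext k; simp only [Pi.add_apply, sum_add_distrib]
  map_smul' c x := by ext k; simp only [Pi.smul_apply, smul_eq_mul, RingHom.id_apply, mul_sum]

theorem fiberSum_apply (f : ι → κ) (x : ι → R) (k : κ) :
    fiberSum f x k = ∑ i ∈ univ.filter (fun i => f i = k), x i :=
  rfl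

theorem sum_fiberSum [Fintype κ] (f : ι → κ) (x : ι → R) : ∑ k, fiberSum f x k = ∑ i, x i :=
  sum_fiberwise univ f x

theorem fiberSum_surjective {f : ι → κ} (hf : Function.Surjective f) :
    Function.Surjective (fiberSum (R := R) f) := by
  classical
  choose s hs using hf
  refine fun y => ⟨fun i => if s (f i) = i then y (f i) else 0, funext fun k => ?_⟩
  rw [fiberSum_apply, sum_congr rfl fun i hi => by rw [(mem_filter.1 hi).2], sum_ite_eq]
  simp [hs]

theorem fiberSum_comp_equiv {ι' : Type*} [Fintype ι'] (f : ι → κ) (e : ι' ≃ ι) (x : ι' → R) :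
    fiberSum (f ∘ e) x = fiberSum f (x ∘ e.symm) := by
  ext k
  simp only [fiberSum_apply, sum_filter, Function.comp_apply]
  rw [← e.sum_comp]
  simp

end FiberSum

theorem Fin.exists_sub_sub_one_eq_of_sum_eq_zero {M : Type*} [AddCommGroup M] {n : ℕ}
    (d : Fin (n + 1) → M) (hd : ∑ i, d i = 0) :
    ∃ x : Fin (n + 1) → M, ∀ v, x v - x (v - 1) = d v := by
  refine ⟨fun u => ∑ i ∈ univ.filter (· ≤ u), d i, fun v => ?_⟩
  dsimp only
  by_cases hv : v = 0
  · subst hv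
    have h0 : univ.filter (· ≤ (0 : Fin (n + 1))) = {0} := by ext i; simp
    have h1 : univ.filter (· ≤ (0 - 1 : Fin (n + 1))) = univ := by
      ext i; simp [Fin.le_iff_val_le_val, Fin.coe_neg_one, Nat.lt_succ_iff.1 i.isLt]
    rw [h0, h1, hd, sum_singleton, sub_zero]
  · have hv' : (v : ℕ) ≠ 0 := fun h => hv (Fin.ext h)
    have hle : ∀ i, i ≤ v - 1 ↔ (i : ℕ) < v := by
      intro i; rw [Fin.le_iff_val_le_val, Fin.coe_sub_one, if_neg hv]; omega
    have hins : univ.filter (· ≤ v) = insert v (univ.filter (· ≤ v - 1)) := by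
      ext i
      simp only [mem_filter, mem_univ, true_and, mem_insert, hle, Fin.le_iff_val_le_val,
        Fin.ext_iff]
      omega
    rw [hins, sum_insert (by simp [hle]), add_sub_cancel_right]

theorem exists_fiberSum_sub_fiberSum_add_one {R κ : Type*} [CommRing R] [Fintype κ]
    [DecidableEq κ] {n : ℕ} [NeZero n] {f : Fin n → κ} (hf : Function.Surjective f)
    (r : κ → R) (hr : ∑ k, r k = 0) :
    ∃ x, fiberSum f x - fiberSum (fun u => f (u + 1)) x = r := by
  obtain ⟨m, rfl⟩ := Nat.exists_eq_add_one_of_ne_zero (NeZero.ne n)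
  obtain ⟨d, rfl⟩ := fiberSum_surjective hf r
  obtain ⟨x, hx⟩ := Fin.exists_sub_sub_one_eq_of_sum_eq_zero d (by rwa [sum_fiberSum] at hr)
  refine ⟨x, ?_⟩
  rw [show (fun u => f (u + 1)) = f ∘ Equiv.addRight 1 from rfl, fiberSum_comp_equiv, ← map_sub]
  congr 1
  funext v
  simpa [sub_eq_add_neg] using hx v

section BalanceMap

variable {R : Type*} [CommRing R] {ι κ μ : Type*} [Fintype ι]

def sumDiff (R κ μ : Type*) [CommRing R] [Fintype κ] [Fintype μ] :
    (κ → R) × (μ → R) →ₗ[R] R where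
  toFun pq := ∑ k, pq.1 k - ∑ m, pq.2 m
  map_add' p q := by simp only [Prod.fst_add, Prod.snd_add, Pi.add_apply, sum_add_distrib]; abel
  map_smul' c p := by simp [mul_sum, mul_sub]

@[simp]
theorem sumDiff_apply [Fintype κ] [Fintype μ] (p : κ → R) (q : μ → R) :
    sumDiff R κ μ (p, q) = ∑ k, p k - ∑ m, q m :=
  rfl

variable [DecidableEq κ] [DecidableEq μ]

variable (R) in
def balanceMap (f g : ι → κ) (h : ι → μ) : (ι → R) × (ι → R) →ₗ[R] (κ → R) × (μ → R) :=
  (fiberSum f ∘ₗ LinearMap.fst R _ _ - fiberSum g ∘ₗ LinearMap.snd R _ _).prod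
    (fiberSum h ∘ₗ (LinearMap.fst R _ _ - LinearMap.snd R _ _))

@[simp]
theorem balanceMap_apply (f g : ι → κ) (h : ι → μ) (x y : ι → R) :
    balanceMap R f g h (x, y) = (fiberSum f x - fiberSum g y, fiberSum h x - fiberSum h y) := by
  simp [balanceMap]

theorem mem_ker_balanceMap {f g : ι → κ} {h : ι → μ} {w : (ι → R) × (ι → R)} :
    w ∈ LinearMap.ker (balanceMap R f g h) ↔
      (∀ k, fiberSum f w.1 k = fiberSum g w.2 k) ∧ ∀ m, fiberSum h w.1 m = fiberSum h w.2 m := by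
  rcases w with ⟨x, y⟩
  simp [Prod.ext_iff, funext_iff, sub_eq_zero]

theorem range_balanceMap [Fintype κ] [Fintype μ] {f g : ι → κ} {h : ι → μ}
    (hh : Function.Surjective h)
    (hfg : ∀ r : κ → R, ∑ k, r k = 0 → ∃ x, fiberSum f x - fiberSum g x = r) :
    LinearMap.range (balanceMap R f g h) = LinearMap.ker (sumDiff R κ μ) := by
  apply le_antisymm
  · rintro _ ⟨⟨x, y⟩, rfl⟩
    simp [sum_sub_distrib, sum_fiberSum]
  · rintro ⟨p, q⟩ hpq
    obtain ⟨z, rfl⟩ := fiberSum_surjective hh q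
    obtain ⟨x, hx⟩ := hfg (p - fiberSum g z) <| by
      simpa [sum_sub_distrib, sum_fiberSum, sub_eq_zero] using hpq
    refine ⟨(x, x - z), ?_⟩
    simp only [balanceMap_apply, map_sub, sub_sub_cancel, Prod.mk.injEq, and_true]
    linear_combination hx

end BalanceMap

section Dimension

variable {K : Type*} [Field K] {ι κ μ : Type*} [Fintype ι] [Fintype κ] [Fintype μ]

theorem finrank_ker_sumDiff [Nonempty κ] :
    Module.finrank K (LinearMap.ker (sumDiff K κ μ)) + 1 = Fintype.card κ + Fintype.card μ := by
  classical
  have hsurj : LinearMap.range (sumDiff K κ μ) = ⊤ := by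
    refine LinearMap.range_eq_top.2 fun c => ⟨(Pi.single (Classical.arbitrary κ) c, 0), ?_⟩
    simp
  have := LinearMap.finrank_range_add_finrank_ker (sumDiff K κ μ)
  rw [hsurj, finrank_top, Module.finrank_self, Module.finrank_prod,
    Module.finrank_fintype_fun_eq_card, Module.finrank_fintype_fun_eq_card] at this
  omega

theorem finrank_ker_balanceMap [DecidableEq κ] [DecidableEq μ] [Nonempty κ]
    {f g : ι → κ} {h : ι → μ} (hh : Function.Surjective h)
    (hfg : ∀ r : κ → K, ∑ k, r k = 0 → ∃ x, fiberSum f x - fiberSum g x = r) :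
    Module.finrank K (LinearMap.ker (balanceMap K f g h)) + Fintype.card κ + Fintype.card μ
      = 2 * Fintype.card ι + 1 := by
  have hrank := LinearMap.finrank_range_add_finrank_ker (balanceMap K f g h)
  rw [range_balanceMap hh hfg, Module.finrank_prod, Module.finrank_fintype_fun_eq_card] at hrank
  have := finrank_ker_sumDiff (K := K) (κ := κ) (μ := μ)
  omega

end Dimension

theorem solution_space_dim_general (l va vb : ℕ) [NeZero l]
    (γa : Fin l → Fin va) (γb : Fin l → Fin vb)
    (ha : Function.Surjective γa) (hb : Function.Surjective γb)
    (W : Submodule ℝ ((Fin l → ℝ) × (Fin l → ℝ)))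
    (hW : ∀ w : (Fin l → ℝ) × (Fin l → ℝ), w ∈ W ↔
      ((∀ lam : Fin va,
          ∑ u ∈ Finset.univ.filter (fun u => γa u = lam), w.1 u
            = ∑ u ∈ Finset.univ.filter (fun u => γa (u + 1) = lam), w.2 u) ∧
       (∀ mu : Fin vb,
          ∑ u ∈ Finset.univ.filter (fun u => γb u = mu), w.1 u
            = ∑ u ∈ Finset.univ.filter (fun u => γb u = mu), w.2 u))) :
    Module.finrank ℝ W = 2 * l - va - vb + 1 := by
  have hWker : W = LinearMap.ker (balanceMap ℝ γa (fun u => γa (u + 1)) γb) := by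
    ext w
    rw [hW, mem_ker_balanceMap]
    rfl
  have : Nonempty (Fin va) := ⟨γa 0⟩
  have hdim := finrank_ker_balanceMap (K := ℝ) hb (exists_fiberSum_sub_fiberSum_add_one ha)
  have hva := Fintype.card_le_of_surjective γa ha
  have hvb := Fintype.card_le_of_surjective γb hb
  rw [← hWker] at hdim
  simp only [Fintype.card_fin] at hdim hva hvb
  omega

theorem solution_space_dim (l va vb : ℕ) [NeZero l] (hl : 1 ≤ l)
    (γa : Fin l → Fin va) (γb : Fin l → Fin vb)
    (ha : Function.Surjective γa) (hb : Function.Surjective γb)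
    (W : Submodule ℝ ((Fin l → ℝ) × (Fin l → ℝ)))
    (hW : ∀ w : (Fin l → ℝ) × (Fin l → ℝ), w ∈ W ↔
      ((∀ lam : Fin va,
          ∑ u ∈ Finset.univ.filter (fun u => γa u = lam), w.1 u
            = ∑ u ∈ Finset.univ.filter (fun u => γa (u + 1) = lam), w.2 u) ∧
       (∀ mu : Fin vb,
          ∑ u ∈ Finset.univ.filter (fun u => γb u = mu), w.1 u
            = ∑ u ∈ Finset.univ.filter (fun u => γb u = mu), w.2 u))) :
    Module.finrank ℝ W = 2 * l - va - vb + 1 :=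
  solution_space_dim_general l va vb γa γb ha hb W hW
end

section
/- Let l ≥ 1, let {I_λ}_{λ=1}^{v_a} and {J_μ}_{μ=1}^{v_b} be partitions of [1,l] into nonempty sets, with Ĩ_λ = I_λ - 1 (mod l). Suppose real numbers a_1,...,a_{v_a}, b_1,...,b_{v_b} satisfy a_λ = b_μ whenever (I_λ ∪ Ĩ_λ) ∩ J_μ ≠ ∅. Then all the a_λ and b_μ are equal to each other. -/
/-! Write `φ u := a (γa u)`. The edges through `u` give `φ u = b (γb u) = φ (u + 1)`, so `φ` is
invariant under the cyclic shift of `Fin l` and hence constant, and surjectivity of `γa` and `γb`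
turns this into the equality of all the `a λ` and `b μ`. -/

open Fin.NatCast in
theorem Fin.apply_eq_apply_zero_of_apply_add_one {n : ℕ} [NeZero n] {α : Type*} {f : Fin n → α}
    (hf : ∀ u, f (u + 1) = f u) (u : Fin n) : f u = f 0 := by
  have h_cast : ∀ k : ℕ, f (k : Fin n) = f 0 := by
    intro k
    induction k with
    | zero => simp
    | succ k ih => rw [Nat.cast_add, Nat.cast_one, hf, ih]
  simpa only [Fin.cast_val_eq_self] using h_cast u.val

theorem bipartite_connectivity_general (l va vb : ℕ) [NeZero l]
    (γa : Fin l → Fin va) (γb : Fin l → Fin vb)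
    (ha : Function.Surjective γa) (hb : Function.Surjective γb)
    (a : Fin va → ℝ) (b : Fin vb → ℝ)
    (hedge : ∀ lam : Fin va, ∀ mu : Fin vb,
      (∃ u : Fin l, (γa u = lam ∨ γa (u + 1) = lam) ∧ γb u = mu) → a lam = b mu) :
    ∀ lam : Fin va, ∀ mu : Fin vb, a lam = b mu := by
  have h_left : ∀ u, a (γa u) = b (γb u) := fun u => hedge _ _ ⟨u, Or.inl rfl, rfl⟩
  have h_right : ∀ u, a (γa (u + 1)) = b (γb u) := fun u => hedge _ _ ⟨u, Or.inr rfl, rfl⟩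
  have h_const : ∀ u, a (γa u) = a (γa 0) :=
    Fin.apply_eq_apply_zero_of_apply_add_one (f := a ∘ γa) fun u =>
      (h_right u).trans (h_left u).symm
  intro lam mu
  obtain ⟨u, rfl⟩ := ha lam
  obtain ⟨v, rfl⟩ := hb mu
  rw [h_const u, ← h_const v, h_left v]

theorem bipartite_connectivity (l va vb : ℕ) [NeZero l] (hl : 1 ≤ l)
    (γa : Fin l → Fin va) (γb : Fin l → Fin vb)
    (ha : Function.Surjective γa) (hb : Function.Surjective γb)
    (a : Fin va → ℝ) (b : Fin vb → ℝ)
    (hedge : ∀ lam : Fin va, ∀ mu : Fin vb,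
      (∃ u : Fin l, (γa u = lam ∨ γa (u + 1) = lam) ∧ γb u = mu) → a lam = b mu) :
    ∀ lam : Fin va, ∀ mu : Fin vb, a lam = b mu :=
  bipartite_connectivity_general l va vb γa γb ha hb a b hedge
end

section
/- Fix reals y_a, y_b > 0 and set Y_a = max(1, y_a), Y_b = max(1, y_b). For every integer l ≥ 1, the main-term sum Σ_{i=1}^{l} y_a^{l-i+1} Σ_{(k_1,...,k_i): k_1+...+k_i = l-i+1, k_1+2k_2+...+i·k_i = l} (l!/i!) Π_{j=1}^{i} m_MP^(j)(y_b)^{k_j}/k_j! is bounded in absolute value by (32e²)^l · Y_a^{l+1} · Y_b^l. -/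
/-!
Every admissible tuple `k` satisfies `∑ kⱼ = l - i + 1` and `∑ (j + 1) kⱼ = l`, so the moment
bound `mMP j y ≤ (4 Y)ʲ` turns its term into at most `(4 Y_b)ˡ (l! / i!) / ∏ kⱼ!`. The factor
`1 / ∏ kⱼ!` is controlled by reweighting: on such tuples it equals
`2^(i-1) / nⁿ · ∏ (n / 2ʲ)^kⱼ / kⱼ!` with `n = l - i + 1`, and summing the latter over all tuples
gives at most `exp (∑ n / 2ʲ) ≤ e^(2n)`. Since `l! 2^(i-1) ≤ 4ˡ i! nⁿ`, each inner sum is at most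
`(16 e² Y_b)ˡ`, and the `l ≤ 2ˡ` outer terms contribute `Y_a^(l+1)` each.
-/

open Finset

/-- The `l`-th moment of the Marchenko-Pastur distribution with parameter `y`. -/
noncomputable def mMP (l : ℕ) (y : ℝ) : ℝ :=
  ∑ i ∈ Finset.range l, y ^ i / (i + 1) * (l.choose i) * ((l - 1).choose i)

open Real
open scoped Nat

noncomputable def mainTermInner (m : ℕ → ℝ) (l i : ℕ) : ℝ :=
  ∑ k : Fin i → Fin (l + 1),
    (if (∑ j : Fin i, (k j : ℕ)) = l - i + 1 ∧
        (∑ j : Fin i, (j.val + 1) * (k j : ℕ)) = l then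
      ((Nat.factorial l : ℝ) / (Nat.factorial i : ℝ)) *
        ∏ j : Fin i, m (j.val + 1) ^ (k j : ℕ) / (Nat.factorial (k j : ℕ) : ℝ)
    else 0)

lemma mMP_nonneg {y : ℝ} (hy : 0 ≤ y) (j : ℕ) : 0 ≤ mMP j y :=
  sum_nonneg fun _ _ => by positivity

lemma mMP_le {y : ℝ} (hy : 0 ≤ y) (j : ℕ) : mMP j y ≤ (4 * max 1 y) ^ j := by
  set Y := max 1 y
  have hY : 1 ≤ Y := le_max_left _ _
  have hterm : ∀ t ∈ range j,
      y ^ t / (t + 1) * (j.choose t) * ((j - 1).choose t) ≤ Y ^ j * 2 ^ j * j.choose t := by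
    intro t ht
    have hpow : y ^ t / (t + 1) ≤ Y ^ j := calc
      y ^ t / (t + 1) ≤ y ^ t := div_le_self (by positivity) (by linarith [t.cast_nonneg (α := ℝ)])
      _ ≤ Y ^ t := pow_le_pow_left₀ hy (le_max_right _ _) t
      _ ≤ Y ^ j := pow_le_pow_right₀ hY (mem_range.1 ht).le
    have hchoose : ((j - 1).choose t : ℝ) ≤ 2 ^ j := by
      exact_mod_cast (Nat.choose_le_two_pow _ _).trans (Nat.pow_le_pow_right two_pos (j.sub_le 1))
    calc y ^ t / (t + 1) * (j.choose t) * ((j - 1).choose t)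
        ≤ Y ^ j * (j.choose t) * 2 ^ j := by gcongr
      _ = Y ^ j * 2 ^ j * j.choose t := by ring
  have hsum : ∑ t ∈ range j, (j.choose t : ℝ) ≤ 2 ^ j := by
    exact_mod_cast (sum_le_sum_of_subset (range_subset_range.2 j.le_succ)).trans_eq
      (Nat.sum_range_choose j)
  calc mMP j y ≤ ∑ t ∈ range j, Y ^ j * 2 ^ j * j.choose t := sum_le_sum hterm
    _ = Y ^ j * 2 ^ j * ∑ t ∈ range j, (j.choose t : ℝ) := by rw [mul_sum]
    _ ≤ Y ^ j * 2 ^ j * 2 ^ j := by gcongr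
    _ = (4 * Y) ^ j := by rw [mul_pow, show (4 : ℝ) = 2 * 2 by norm_num, mul_pow]; ring

lemma abs_mMP_le {y : ℝ} (hy : 0 ≤ y) (j : ℕ) : |mMP j y| ≤ (4 * max 1 y) ^ j := by
  rw [abs_of_nonneg (mMP_nonneg hy j)]
  exact mMP_le hy j

lemma sum_prod_pow_div_factorial_le_exp {ι : Type*} [Fintype ι] [DecidableEq ι] {x : ι → ℝ}
    (hx : ∀ j, 0 ≤ x j) (N : ℕ) :
    ∑ k : ι → Fin N, ∏ j, x j ^ (k j : ℕ) / ((k j : ℕ)! : ℝ) ≤ exp (∑ j, x j) := by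
  rw [← Fintype.prod_sum fun j (m : Fin N) => x j ^ (m : ℕ) / ((m : ℕ)! : ℝ), exp_sum]
  refine prod_le_prod (fun j _ => sum_nonneg fun _ _ => div_nonneg (pow_nonneg (hx j) _)
    (Nat.cast_nonneg _)) fun j _ => ?_
  rw [Fin.sum_univ_eq_sum_range (fun m => x j ^ m / (m ! : ℝ))]
  exact sum_le_exp_of_nonneg (hx j) N

lemma sum_inv_prod_factorial_le {i N n s : ℕ} {a : ℝ} (ha : 0 < a) (S : Finset (Fin i → Fin N))
    (hS : ∀ k ∈ S, ∑ j, (k j : ℕ) = n ∧ ∑ j : Fin i, j.val * (k j : ℕ) = s) :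
    ∑ k ∈ S, (∏ j, ((k j : ℕ)! : ℝ))⁻¹ ≤ 2 ^ s / a ^ n * exp (2 * a) := by
  set g : Fin i → ℝ := fun j => a * (1 / 2) ^ j.val
  have hweight : ∀ k ∈ S,
      (∏ j, ((k j : ℕ)! : ℝ))⁻¹ = 2 ^ s / a ^ n * ∏ j, g j ^ (k j : ℕ) / ((k j : ℕ)! : ℝ) := by
    intro k hk
    obtain ⟨hn, hs⟩ := hS k hk
    have hnum : ∏ j, g j ^ (k j : ℕ) = a ^ n * (1 / 2) ^ s := by
      simp only [g, mul_pow, ← pow_mul, prod_mul_distrib, prod_pow_eq_pow_sum, hn, hs]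
    rw [prod_div_distrib, hnum]
    field_simp
    rw [← mul_pow]
    norm_num
  have hgeom : ∑ j, g j ≤ 2 * a := by
    rw [← mul_sum, Fin.sum_univ_eq_sum_range (fun m => ((1 : ℝ) / 2) ^ m), mul_comm]
    exact mul_le_mul_of_nonneg_right (sum_geometric_two_le i) ha.le
  calc ∑ k ∈ S, (∏ j, ((k j : ℕ)! : ℝ))⁻¹
      = 2 ^ s / a ^ n * ∑ k ∈ S, ∏ j, g j ^ (k j : ℕ) / ((k j : ℕ)! : ℝ) := by
        rw [mul_sum]; exact sum_congr rfl hweight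
    _ ≤ 2 ^ s / a ^ n * ∑ k : Fin i → Fin N, ∏ j, g j ^ (k j : ℕ) / ((k j : ℕ)! : ℝ) := by
        gcongr
        exact subset_univ S
    _ ≤ 2 ^ s / a ^ n * exp (2 * a) := by
        gcongr
        exact (sum_prod_pow_div_factorial_le_exp (fun j => by positivity) N).trans
          (exp_le_exp.2 hgeom)

lemma factorial_add_le (a b : ℕ) : (a + b)! ≤ 2 ^ (a + b) * (a ! * b !) := by
  rw [← Nat.add_choose_mul_factorial_mul_factorial, mul_assoc]
  exact Nat.mul_le_mul_right _ (Nat.choose_le_two_pow _ _)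

lemma factorial_mul_two_pow_le {i l : ℕ} (hi : 1 ≤ i) (hil : i ≤ l) :
    l ! * 2 ^ (i - 1) ≤ 4 ^ l * (i ! * (l - i + 1) ^ (l - i + 1)) := by
  set n := l - i + 1
  have hl : l = (i - 1) + n := by omega
  calc l ! * 2 ^ (i - 1) ≤ 2 ^ l * ((i - 1)! * n !) * 2 ^ l := by
        gcongr
        · exact hl ▸ factorial_add_le (i - 1) n
        · exact one_le_two
        · omega
    _ ≤ 2 ^ l * (i ! * n ^ n) * 2 ^ l := by
        gcongr
        · exact i.sub_le 1
        · exact Nat.factorial_le_pow n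
    _ = 4 ^ l * (i ! * n ^ n) := by
        rw [show 4 = 2 * 2 from rfl, mul_pow]; ring

lemma abs_mainTermInner_le {m : ℕ → ℝ} {C : ℝ} (hm : ∀ j, |m j| ≤ C ^ j) {l i : ℕ}
    (hi : 1 ≤ i) (hil : i ≤ l) :
    |mainTermInner m l i| ≤ (4 * C * exp 1 ^ 2) ^ l := by
  set n := l - i + 1
  set S := univ.filter fun k : Fin i → Fin (l + 1) =>
    ∑ j, (k j : ℕ) = n ∧ ∑ j : Fin i, (j.val + 1) * (k j : ℕ) = l
  have hC : 0 ≤ C := (abs_nonneg _).trans (by simpa using hm 1)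
  have hterm : ∀ k ∈ S, |(l ! / i ! : ℝ) * ∏ j, m (j.val + 1) ^ (k j : ℕ) / ((k j : ℕ)! : ℝ)|
      ≤ l ! / i ! * C ^ l * (∏ j, ((k j : ℕ)! : ℝ))⁻¹ := by
    intro k hk
    have hl : ∑ j : Fin i, (j.val + 1) * (k j : ℕ) = l := (mem_filter.1 hk).2.2
    have hprod : |∏ j, m (j.val + 1) ^ (k j : ℕ) / ((k j : ℕ)! : ℝ)|
        ≤ C ^ l * (∏ j, ((k j : ℕ)! : ℝ))⁻¹ := calc
      _ = ∏ j, |m (j.val + 1)| ^ (k j : ℕ) / ((k j : ℕ)! : ℝ) := by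
        simp only [abs_prod, abs_div, abs_pow, Nat.abs_cast]
      _ ≤ ∏ j, (C ^ (j.val + 1)) ^ (k j : ℕ) / ((k j : ℕ)! : ℝ) :=
        prod_le_prod (fun j _ => by positivity) fun j _ => by gcongr; exact hm _
      _ = C ^ l * (∏ j, ((k j : ℕ)! : ℝ))⁻¹ := by
        rw [prod_div_distrib, div_eq_mul_inv]
        simp only [← pow_mul, prod_pow_eq_pow_sum, hl]
    rw [abs_mul, abs_of_nonneg (by positivity), mul_assoc]
    gcongr
  have hS : ∀ k ∈ S, ∑ j, (k j : ℕ) = n ∧ ∑ j : Fin i, j.val * (k j : ℕ) = i - 1 := by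
    intro k hk
    obtain ⟨hn, hl⟩ := (mem_filter.1 hk).2
    have hsplit : ∑ j : Fin i, (j.val + 1) * (k j : ℕ)
        = ∑ j : Fin i, j.val * (k j : ℕ) + ∑ j, (k j : ℕ) := by
      rw [← sum_add_distrib]
      exact sum_congr rfl fun j _ => add_one_mul _ _
    exact ⟨hn, by omega⟩
  have hfact : (l ! / i ! : ℝ) * (2 ^ (i - 1) / n ^ n) ≤ 4 ^ l := by
    rw [div_mul_div_comm, div_le_iff₀ (by positivity)]
    exact_mod_cast factorial_mul_two_pow_le hi hil
  have hexp : exp (2 * n) ≤ (exp 1 ^ 2) ^ l := by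
    rw [← pow_mul, exp_one_pow, exp_le_exp]
    exact_mod_cast (by omega : 2 * n ≤ 2 * l)
  calc |mainTermInner m l i|
      = |∑ k ∈ S, (l ! / i ! : ℝ) * ∏ j, m (j.val + 1) ^ (k j : ℕ) / ((k j : ℕ)! : ℝ)| := by
        rw [mainTermInner, sum_filter]
    _ ≤ ∑ k ∈ S, l ! / i ! * C ^ l * (∏ j, ((k j : ℕ)! : ℝ))⁻¹ :=
        (abs_sum_le_sum_abs _ _).trans (sum_le_sum hterm)
    _ = l ! / i ! * C ^ l * ∑ k ∈ S, (∏ j, ((k j : ℕ)! : ℝ))⁻¹ := (mul_sum _ _ _).symm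
    _ ≤ l ! / i ! * C ^ l * (2 ^ (i - 1) / n ^ n * exp (2 * n)) := by
        gcongr
        exact sum_inv_prod_factorial_le (by positivity) S hS
    _ = C ^ l * ((l ! / i ! : ℝ) * (2 ^ (i - 1) / n ^ n)) * exp (2 * n) := by ring
    _ ≤ C ^ l * 4 ^ l * (exp 1 ^ 2) ^ l := by gcongr
    _ = (4 * C * exp 1 ^ 2) ^ l := by ring

theorem main_term_bound_general (y_a y_b : ℝ) (hya : 0 < y_a) (hyb : 0 < y_b)
    (l : ℕ) :
    |∑ i ∈ Finset.Icc 1 l, y_a ^ (l - i + 1) *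
        ∑ k : Fin i → Fin (l + 1),
          (if (∑ j : Fin i, (k j : ℕ)) = l - i + 1 ∧
              (∑ j : Fin i, (j.val + 1) * (k j : ℕ)) = l then
            ((Nat.factorial l : ℝ) / (Nat.factorial i : ℝ)) *
              ∏ j : Fin i, mMP (j.val + 1) y_b ^ (k j : ℕ) / (Nat.factorial (k j : ℕ) : ℝ)
          else 0)|
      ≤ (32 * Real.exp 1 ^ 2) ^ l * max 1 y_a ^ (l + 1) * max 1 y_b ^ l := by
  have hterm : ∀ i ∈ Icc 1 l,
      |y_a ^ (l - i + 1) * mainTermInner (fun j => mMP j y_b) l i|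
        ≤ max 1 y_a ^ (l + 1) * (4 * (4 * max 1 y_b) * exp 1 ^ 2) ^ l := by
    intro i hi
    obtain ⟨hi1, hil⟩ := mem_Icc.1 hi
    rw [abs_mul, abs_pow, abs_of_pos hya]
    gcongr
    · calc y_a ^ (l - i + 1) ≤ max 1 y_a ^ (l - i + 1) := by gcongr; exact le_max_right _ _
        _ ≤ max 1 y_a ^ (l + 1) := pow_le_pow_right₀ (le_max_left _ _) (by omega)
    · exact abs_mainTermInner_le (abs_mMP_le hyb.le) hi1 hil
  calc |∑ i ∈ Icc 1 l, y_a ^ (l - i + 1) * mainTermInner (fun j => mMP j y_b) l i|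
      ≤ ∑ i ∈ Icc 1 l, max 1 y_a ^ (l + 1) * (4 * (4 * max 1 y_b) * exp 1 ^ 2) ^ l :=
        (abs_sum_le_sum_abs _ _).trans (sum_le_sum hterm)
    _ = l * (max 1 y_a ^ (l + 1) * (4 * (4 * max 1 y_b) * exp 1 ^ 2) ^ l) := by simp
    _ ≤ 2 ^ l * (max 1 y_a ^ (l + 1) * (4 * (4 * max 1 y_b) * exp 1 ^ 2) ^ l) := by
        gcongr; exact_mod_cast l.lt_two_pow_self.le
    _ = (32 * exp 1 ^ 2) ^ l * max 1 y_a ^ (l + 1) * max 1 y_b ^ l := by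
        rw [show (32 * exp 1 ^ 2) ^ l = 2 ^ l * (16 * exp 1 ^ 2) ^ l by rw [← mul_pow]; ring]
        ring

theorem main_term_bound (y_a y_b : ℝ) (hya : 0 < y_a) (hyb : 0 < y_b)
    (l : ℕ) (hl : 1 ≤ l) :
    |∑ i ∈ Finset.Icc 1 l, y_a ^ (l - i + 1) *
        ∑ k : Fin i → Fin (l + 1),
          (if (∑ j : Fin i, (k j : ℕ)) = l - i + 1 ∧
              (∑ j : Fin i, (j.val + 1) * (k j : ℕ)) = l then
            ((Nat.factorial l : ℝ) / (Nat.factorial i : ℝ)) *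
              ∏ j : Fin i, mMP (j.val + 1) y_b ^ (k j : ℕ) / (Nat.factorial (k j : ℕ) : ℝ)
          else 0)|
      ≤ (32 * Real.exp 1 ^ 2) ^ l * max 1 y_a ^ (l + 1) * max 1 y_b ^ l :=
  main_term_bound_general y_a y_b hya hyb l
end
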